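/- A Banach space X has property U in its bidual X** if and only if the natural projection π_X : X*** → X*** satisfies: for every x*** ∈ X***, ‖π_X x***‖ = ‖x***‖ implies π_X x*** = x***. -/

import Mathlib

open NormedSpace

/-- The topological dual `E →L[𝕜] 𝕜` (the former Mathlib `NormedSpace.Dual`). -/
abbrev NormedSpace.Dual (𝕜 : Type*) [NontriviallyNormedField 𝕜] (E : Type*)
    [SeminormedAddCommGroup E] [NormedSpace 𝕜 E] : Type _ :=
  StrongDual 𝕜 E

/-- The adjoint `T* : X* → Y*` of a bounded operator `T : Y → X`. -/
noncomputable def adj {Y X : Type*} [SeminormedAddCommGroup Y] [NormedSpace ℝ Y]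
    [SeminormedAddCommGroup X] [NormedSpace ℝ X] (T : Y →L[ℝ] X) :
    Dual ℝ X →L[ℝ] Dual ℝ Y :=
  LinearMap.mkContinuous
    { toFun := fun f => f.comp T
      map_add' := fun f g => by ext y; simp
      map_smul' := fun c f => by ext y; simp }
    ‖T‖ (fun f => by simpa [mul_comm] using f.opNorm_comp_le T)

/-- The natural projection `π_X : X*** → X***` onto `X*`. -/
noncomputable def piX (X : Type*) [SeminormedAddCommGroup X] [NormedSpace ℝ X] :
    Dual ℝ (Dual ℝ (Dual ℝ X)) →L[ℝ] Dual ℝ (Dual ℝ (Dual ℝ X)) :=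
  (inclusionInDoubleDual ℝ (Dual ℝ X)).comp (adj (inclusionInDoubleDual ℝ X))

/-- The triple adjoint `T*** : X*** → Y***` of `T : Y → X`. -/
noncomputable def adj3 {Y X : Type*} [SeminormedAddCommGroup Y] [NormedSpace ℝ Y]
    [SeminormedAddCommGroup X] [NormedSpace ℝ X] (T : Y →L[ℝ] X) :
    Dual ℝ (Dual ℝ (Dual ℝ X)) →L[ℝ] Dual ℝ (Dual ℝ (Dual ℝ Y)) :=
  adj (adj (adj T))

/-!
Write `ι` for the canonical embedding `X → X**`. A functional `F ∈ X***` extends `f ∈ X*` exactly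
when `F ∘ ι = f`, and then `π_X F = ι f` is the canonical extension of `f`, which has norm `‖f‖`.
So `π_X F` and `F` are always extensions of the same functional `F ∘ ι`, and `‖π_X F‖ = ‖F‖` says
precisely that `F` is a norm-preserving one. Uniqueness of norm-preserving extensions is therefore
the statement that every norm-preserving extension `F` coincides with `π_X F`.
-/

theorem norm_inclusionInDoubleDual {𝕜 E : Type*} [RCLike 𝕜] [SeminormedAddCommGroup E]
    [NormedSpace 𝕜 E] (x : E) : ‖inclusionInDoubleDual 𝕜 E x‖ = ‖x‖ :=
  (inclusionInDoubleDualLi 𝕜).norm_map x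

section

variable {X : Type*} [SeminormedAddCommGroup X] [NormedSpace ℝ X]

theorem adj_inclusionInDoubleDual_eq_iff {F : Dual ℝ (Dual ℝ (Dual ℝ X))} {f : Dual ℝ X} :
    adj (inclusionInDoubleDual ℝ X) F = f ↔ ∀ x : X, F (inclusionInDoubleDual ℝ X x) = f x :=
  ContinuousLinearMap.ext_iff

theorem piX_apply (F : Dual ℝ (Dual ℝ (Dual ℝ X))) :
    piX X F = inclusionInDoubleDual ℝ (Dual ℝ X) (adj (inclusionInDoubleDual ℝ X) F) :=
  rfl

theorem piX_apply_inclusionInDoubleDual (F : Dual ℝ (Dual ℝ (Dual ℝ X))) (x : X) :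
    piX X F (inclusionInDoubleDual ℝ X x) = F (inclusionInDoubleDual ℝ X x) :=
  rfl

theorem norm_piX (F : Dual ℝ (Dual ℝ (Dual ℝ X))) :
    ‖piX X F‖ = ‖adj (inclusionInDoubleDual ℝ X) F‖ :=
  norm_inclusionInDoubleDual _

theorem piX_eq_of_extends {F : Dual ℝ (Dual ℝ (Dual ℝ X))} {f : Dual ℝ X}
    (hF : ∀ x : X, F (inclusionInDoubleDual ℝ X x) = f x) :
    piX X F = inclusionInDoubleDual ℝ (Dual ℝ X) f := by
  rw [piX_apply, adj_inclusionInDoubleDual_eq_iff.mpr hF]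

theorem norm_piX_of_extends {F : Dual ℝ (Dual ℝ (Dual ℝ X))} {f : Dual ℝ X}
    (hF : ∀ x : X, F (inclusionInDoubleDual ℝ X x) = f x) : ‖piX X F‖ = ‖f‖ := by
  rw [piX_eq_of_extends hF, norm_inclusionInDoubleDual]

end

theorem property_U_iff_SU_general (X : Type*) [NormedAddCommGroup X]
    [NormedSpace ℝ X] :
    (∀ f : Dual ℝ X, ∃! F : Dual ℝ (Dual ℝ (Dual ℝ X)),
        (∀ x : X, F (inclusionInDoubleDual ℝ X x) = f x) ∧ ‖F‖ = ‖f‖) ↔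
    (∀ F : Dual ℝ (Dual ℝ (Dual ℝ X)), ‖piX X F‖ = ‖F‖ → piX X F = F) := by
  constructor
  · intro hU F hnorm
    obtain ⟨G, -, hG⟩ := hU (adj (inclusionInDoubleDual ℝ X) F)
    have hπF := norm_piX F
    rw [hG (piX X F) ⟨piX_apply_inclusionInDoubleDual F, hπF⟩,
      hG F ⟨fun _ => rfl, hnorm ▸ hπF⟩]
  · intro hSU f
    refine ⟨inclusionInDoubleDual ℝ (Dual ℝ X) f, ⟨fun _ => rfl, norm_inclusionInDoubleDual f⟩, ?_⟩
    rintro G ⟨hG, hnorm⟩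
    rw [← piX_eq_of_extends hG]
    exact (hSU G ((norm_piX_of_extends hG).trans hnorm.symm)).symm

/-- `X` has property U in `X**` iff `‖π_X x***‖ = ‖x***‖` implies `π_X x*** = x***`. -/
theorem property_U_iff_SU (X : Type*) [NormedAddCommGroup X]
    [NormedSpace ℝ X] [CompleteSpace X] :
    (∀ f : Dual ℝ X, ∃! F : Dual ℝ (Dual ℝ (Dual ℝ X)),
        (∀ x : X, F (inclusionInDoubleDual ℝ X x) = f x) ∧ ‖F‖ = ‖f‖) ↔
    (∀ F : Dual ℝ (Dual ℝ (Dual ℝ X)), ‖piX X F‖ = ‖F‖ → piX X F = F) :=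
  property_U_iff_SU_general X
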